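/- arXiv:1507.00228 — 6 statements merged into one kernel-verified Lean document; each statement's English description precedes it below -/
import Mathlib

section
/- Let S = {(x,y) ∈ ℝ^n × ℝ^p : Gx + Hy ≥ h} be nonempty and let P(x,y) = (y, -e^T y) ∈ ℝ^{p+1}, where e = (1,...,1)^T. Then P[S] ⊆ {z ∈ ℝ^{p+1} : e_{p+1}-augmented sum of coordinates equals 0}, i.e., every z ∈ P[S] satisfies z_1 + ... + z_{p+1} = 0; consequently every feasible point and every feasible direction of S is a minimizer of the multiple objective linear program minimizing P(x,y) over S with respect to the ordering cone ℝ^{p+1}_+. -/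
open Pointwise Set

/-! `P` maps into the hyperplane of vectors with zero coordinate sum, and two componentwise
comparable vectors with the same coordinate sum are equal; so no value of `P` strictly dominates
another, whatever the feasible set. -/

theorem Fin.sum_snoc_neg_sum {M : Type*} [AddCommGroup M] {p : ℕ} (y : Fin p → M) :
    ∑ j, (Fin.snoc y (-∑ i, y i) : Fin (p + 1) → M) j = 0 := by
  rw [Fin.sum_snoc, add_neg_cancel]

theorem Pi.eq_of_le_of_sum_eq {ι M : Type*} [Fintype ι] [AddCommMonoid M] [PartialOrder M]
    [IsOrderedCancelAddMonoid M] {x y : ι → M} (hle : x ≤ y)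
    (hsum : ∑ i, x i = ∑ i, y i) : x = y :=
  funext fun i => (Finset.sum_eq_sum_iff_of_le fun j _ => hle j).1 hsum i (Finset.mem_univ i)

theorem molp_all_points_and_directions_are_minimizers_general
    (k n p : ℕ) (G : Matrix (Fin k) (Fin n) ℝ) (H : Matrix (Fin k) (Fin p) ℝ)
    (S : Set ((Fin n → ℝ) × (Fin p → ℝ)))
    (P : (Fin n → ℝ) × (Fin p → ℝ) → (Fin (p + 1) → ℝ))
    (hP : P = fun s => Fin.snoc s.2 (-(∑ i, s.2 i))) :
    (∀ s ∈ S, ∑ j, P s j = 0) ∧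
    -- every feasible point is a minimizer
    (∀ s ∈ S, ¬ ∃ v ∈ S, (∀ j, P v j ≤ P s j) ∧ P v ≠ P s) ∧
    -- every feasible direction is a minimizer (of the homogeneous problem)
    (∀ s : (Fin n → ℝ) × (Fin p → ℝ), s ≠ 0 →
      (∀ i, (0:ℝ) ≤ G.mulVec s.1 i + H.mulVec s.2 i) →
      ¬ ∃ v : (Fin n → ℝ) × (Fin p → ℝ),
          (∀ i, (0:ℝ) ≤ G.mulVec v.1 i + H.mulVec v.2 i) ∧
          (∀ j, P v j ≤ P s j) ∧ P v ≠ P s) := by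
  have hsum (s) : ∑ j, P s j = 0 := hP ▸ Fin.sum_snoc_neg_sum s.2
  have hmin (s v) (hle : ∀ j, P v j ≤ P s j) : P v = P s :=
    Pi.eq_of_le_of_sum_eq hle ((hsum v).trans (hsum s).symm)
  exact ⟨fun s _ => hsum s, fun s _ ⟨v, _, hle, hne⟩ => hne (hmin s v hle),
    fun s _ _ ⟨v, _, hle, hne⟩ => hne (hmin s v hle)⟩

theorem molp_all_points_and_directions_are_minimizers
    (k n p : ℕ) (G : Matrix (Fin k) (Fin n) ℝ) (H : Matrix (Fin k) (Fin p) ℝ)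
    (h : Fin k → ℝ)
    (S : Set ((Fin n → ℝ) × (Fin p → ℝ)))
    (hS : S = {s | ∀ i, h i ≤ G.mulVec s.1 i + H.mulVec s.2 i})
    (hne : S.Nonempty)
    (P : (Fin n → ℝ) × (Fin p → ℝ) → (Fin (p + 1) → ℝ))
    (hP : P = fun s => Fin.snoc s.2 (-(∑ i, s.2 i))) :
    (∀ s ∈ S, ∑ j, P s j = 0) ∧
    -- every feasible point is a minimizer
    (∀ s ∈ S, ¬ ∃ v ∈ S, (∀ j, P v j ≤ P s j) ∧ P v ≠ P s) ∧
    -- every feasible direction is a minimizer (of the homogeneous problem)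
    (∀ s : (Fin n → ℝ) × (Fin p → ℝ), s ≠ 0 →
      (∀ i, (0:ℝ) ≤ G.mulVec s.1 i + H.mulVec s.2 i) →
      ¬ ∃ v : (Fin n → ℝ) × (Fin p → ℝ),
          (∀ i, (0:ℝ) ≤ G.mulVec v.1 i + H.mulVec v.2 i) ∧
          (∀ j, P v j ≤ P s j) ∧ P v ≠ P s) :=
  molp_all_points_and_directions_are_minimizers_general k n p G H S P hP
end

section
/- Let Y ⊆ ℝ^p be a polyhedron given as Y = {y : ∃x, Gx + Hy ≥ h}, assume Y ≠ ∅, and consider the MOLP minimizing P(x,y) = (y, -e^T y) over S = {(x,y) : Gx + Hy ≥ h} with ordering cone ℝ^{p+1}_+. If (S_poi, S_dir) is a solution of this MOLP (a finite infimizer consisting of minimizers), then Y = conv(proj_y S_poi) + cone(proj_y S_dir), i.e., (S_poi, S_dir) is a solution of the polyhedral projection problem. -/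
open Pointwise Set

/-- `cone B = {λ x : λ ≥ 0, x ∈ conv B}`, with `cone ∅ = {0}`. -/
def coneOf {q : ℕ} (B : Set (Fin q → ℝ)) : Set (Fin q → ℝ) :=
  insert 0 {x | ∃ l : ℝ, 0 ≤ l ∧ ∃ b ∈ convexHull ℝ B, x = l • b}

/-!
`P` maps `S` into the hyperplane `∑ z = 0`, which also contains `conv P[S_poi] + cone P[S_dir]`.
Inside that hyperplane adding the orthant `ℝ^{p+1}_+` changes nothing, so the infimizer identity
gives `P[S] ⊆ conv P[S_poi] + cone P[S_dir]`, and dropping the last coordinate of `P` yields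
`Y ⊆ conv (proj_y S_poi) + cone (proj_y S_dir)`. Conversely `conv S_poi ⊆ S` and `S_dir` lies in
the recession cone of `S`, so every point of the right-hand side is the `y`-part of a point of `S`.
-/

section Cones

variable {q : ℕ}

theorem image_coneOf {q' : ℕ} (f : (Fin q → ℝ) →ₗ[ℝ] (Fin q' → ℝ)) (B : Set (Fin q → ℝ)) :
    f '' coneOf B = coneOf (f '' B) := by
  simp only [coneOf, image_insert_eq, map_zero, ← f.image_convexHull]
  congr 1
  ext y
  constructor
  · rintro ⟨x, ⟨l, hl, b, hb, rfl⟩, rfl⟩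
    exact ⟨l, hl, f b, mem_image_of_mem f hb, map_smul f l b⟩
  · rintro ⟨l, hl, _, ⟨b, hb, rfl⟩, rfl⟩
    exact ⟨l • b, ⟨l, hl, b, hb, rfl⟩, map_smul f l b⟩

theorem coneOf_subset_submodule {M : Submodule ℝ (Fin q → ℝ)} {B : Set (Fin q → ℝ)}
    (hB : B ⊆ M) : coneOf B ⊆ M := by
  rintro _ (rfl | ⟨l, -, b, hb, rfl⟩)
  · exact M.zero_mem
  · exact M.smul_mem l (convexHull_min hB M.convex hb)

theorem coneOf_image_subset_image {E : Type*} [AddCommGroup E] [Module ℝ E]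
    (f : E →ₗ[ℝ] (Fin q → ℝ)) {K : PointedCone ℝ E} {D : Set E} (hD : D ⊆ K) :
    coneOf (f '' D) ⊆ f '' K := by
  rintro _ (rfl | ⟨l, hl, _, hb, rfl⟩)
  · exact ⟨0, K.zero_mem, map_zero f⟩
  · rw [← f.image_convexHull] at hb
    obtain ⟨b, hb, rfl⟩ := hb
    exact ⟨l • b, K.smul_mem hl (convexHull_min hD K.convex hb), map_smul f l b⟩

end Cones

def sumZero (q : ℕ) : Submodule ℝ (Fin q → ℝ) :=
  LinearMap.ker (∑ j, LinearMap.proj j)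

theorem mem_sumZero {q : ℕ} {z : Fin q → ℝ} : z ∈ sumZero q ↔ ∑ j, z j = 0 := by
  simp [sumZero]

theorem mem_of_mem_add_nonneg_of_mem_sumZero {q : ℕ} {A : Set (Fin q → ℝ)} {z : Fin q → ℝ}
    (hA : A ⊆ sumZero q) (hz : z ∈ A + {r | ∀ j, 0 ≤ r j}) (hz0 : z ∈ sumZero q) : z ∈ A := by
  obtain ⟨a, ha, r, hr, rfl⟩ := hz
  have hr_sum : ∑ j, r j = 0 := by
    simpa [mem_sumZero.mp (hA ha)] using
      mem_sumZero.mp ((sumZero q).sub_mem hz0 (hA ha))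
  have hr0 : r = 0 := funext fun j =>
    (Finset.sum_eq_zero_iff_of_nonneg fun j _ => hr j).mp hr_sum j (Finset.mem_univ j)
  simpa [hr0] using ha

theorem subset_convexHull_add_coneOf_of_add_nonneg_eq {q : ℕ} {T V W : Set (Fin q → ℝ)}
    (hT : T ⊆ sumZero q) (hV : V ⊆ sumZero q) (hW : W ⊆ sumZero q)
    (h : convexHull ℝ V + coneOf W + {r | ∀ j, 0 ≤ r j} = T + {r | ∀ j, 0 ≤ r j}) :
    T ⊆ convexHull ℝ V + coneOf W := by
  intro z hz
  refine mem_of_mem_add_nonneg_of_mem_sumZero ?_ ?_ (hT hz)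
  · rintro _ ⟨a, ha, d, hd, rfl⟩
    exact (sumZero q).add_mem (convexHull_min hV (sumZero q).convex ha)
      (coneOf_subset_submodule hW hd)
  · exact h ▸ ⟨z, hz, 0, fun _ => le_rfl, add_zero z⟩

section Constraints

variable {ι m l : Type*} [Fintype m] [Fintype l]

def constraintMap (G : Matrix ι m ℝ) (H : Matrix ι l ℝ) : (m → ℝ) × (l → ℝ) →ₗ[ℝ] (ι → ℝ) :=
  G.mulVecLin.coprod H.mulVecLin

theorem setOf_le_constraint_eq_preimage (G : Matrix ι m ℝ) (H : Matrix ι l ℝ) (c : ι → ℝ) :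
    {s : (m → ℝ) × (l → ℝ) | ∀ i, c i ≤ G.mulVec s.1 i + H.mulVec s.2 i} =
      constraintMap G H ⁻¹' Ici c := by
  ext s
  simp [constraintMap, Pi.le_def]

theorem convexHull_add_coneOf_subset_image_preimage_Ici {E : Type*} [AddCommGroup E]
    [Module ℝ E] {q : ℕ} (f : E →ₗ[ℝ] (Fin q → ℝ)) (L : E →ₗ[ℝ] (ι → ℝ)) {c : ι → ℝ}
    {A D : Set E} (hA : A ⊆ L ⁻¹' Ici c) (hD : D ⊆ L ⁻¹' Ici 0) :
    convexHull ℝ (f '' A) + coneOf (f '' D) ⊆ f '' (L ⁻¹' Ici c) := by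
  rintro _ ⟨_, ha, _, hd, rfl⟩
  rw [← f.image_convexHull] at ha
  obtain ⟨a, ha, rfl⟩ := ha
  obtain ⟨b, hb, rfl⟩ :=
    coneOf_image_subset_image f (K := (PointedCone.positive ℝ (ι → ℝ)).comap L) hD hd
  have ha' : c ≤ L a := convexHull_min hA ((convex_Ici c).linear_preimage L) ha
  exact ⟨a + b, by simpa using add_le_add ha' (show 0 ≤ L b from hb), map_add f a b⟩

end Constraints

theorem molp_solution_solves_polyhedral_projection_general
    (k n p : ℕ) (G : Matrix (Fin k) (Fin n) ℝ) (H : Matrix (Fin k) (Fin p) ℝ)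
    (h : Fin k → ℝ)
    (Y : Set (Fin p → ℝ))
    (hY : Y = {y | ∃ x : Fin n → ℝ, ∀ i, h i ≤ G.mulVec x i + H.mulVec y i})
    (S : Set ((Fin n → ℝ) × (Fin p → ℝ)))
    (hS : S = {s | ∀ i, h i ≤ G.mulVec s.1 i + H.mulVec s.2 i})
    (P : (Fin n → ℝ) × (Fin p → ℝ) → (Fin (p + 1) → ℝ))
    (hP : P = fun s => Fin.snoc s.2 (-(∑ i, s.2 i)))
    (Spoi Sdir : Set ((Fin n → ℝ) × (Fin p → ℝ)))
    -- feasibility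
    (hfeas1 : Spoi ⊆ S)
    (hfeas2 : ∀ s ∈ Sdir, s ≠ 0 ∧ ∀ i, (0:ℝ) ≤ G.mulVec s.1 i + H.mulVec s.2 i)
    -- finite infimizer
    (hinf : convexHull ℝ (P '' Spoi) + coneOf (P '' Sdir) +
              {z : Fin (p + 1) → ℝ | ∀ j, 0 ≤ z j} =
            (P '' S) + {z : Fin (p + 1) → ℝ | ∀ j, 0 ≤ z j}) :
    Y = convexHull ℝ (Prod.snd '' Spoi) + coneOf (Prod.snd '' Sdir) := by
  have hSL : S = constraintMap G H ⁻¹' Ici h := hS.trans (setOf_le_constraint_eq_preimage G H h)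
  have hYS : Y = Prod.snd '' S := by
    ext y
    simp [hY, hS]
  set Q : (Fin (p + 1) → ℝ) →ₗ[ℝ] (Fin p → ℝ) := LinearMap.funLeft ℝ ℝ Fin.castSucc
  have hQP : ∀ s, Q (P s) = s.2 := fun s => funext fun i => by simp [Q, hP]
  have hP_image : ∀ B, P '' B ⊆ sumZero (p + 1) := fun B => image_subset_iff.mpr fun s _ =>
    mem_sumZero.mpr (by simp [hP, Fin.sum_univ_castSucc])
  apply Subset.antisymm
  · calc Y = Q '' (P '' S) := by rw [hYS, image_image]; simp only [hQP]
      _ ⊆ Q '' (convexHull ℝ (P '' Spoi) + coneOf (P '' Sdir)) := image_mono <|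
        subset_convexHull_add_coneOf_of_add_nonneg_eq (hP_image S) (hP_image Spoi) (hP_image Sdir)
          hinf
      _ = _ := by
        rw [image_add, Q.image_convexHull, image_coneOf, image_image, image_image]
        simp only [hQP]
  · have hSdir : Sdir ⊆ constraintMap G H ⁻¹' Ici 0 := fun s hs => by
      simpa [← setOf_le_constraint_eq_preimage] using (hfeas2 s hs).2
    simpa [hYS, hSL] using convexHull_add_coneOf_subset_image_preimage_Ici
      (LinearMap.snd ℝ (Fin n → ℝ) (Fin p → ℝ)) _ (hSL ▸ hfeas1) hSdir

theorem molp_solution_solves_polyhedral_projection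
    (k n p : ℕ) (G : Matrix (Fin k) (Fin n) ℝ) (H : Matrix (Fin k) (Fin p) ℝ)
    (h : Fin k → ℝ)
    (Y : Set (Fin p → ℝ))
    (hY : Y = {y | ∃ x : Fin n → ℝ, ∀ i, h i ≤ G.mulVec x i + H.mulVec y i})
    (hne : Y.Nonempty)
    (S : Set ((Fin n → ℝ) × (Fin p → ℝ)))
    (hS : S = {s | ∀ i, h i ≤ G.mulVec s.1 i + H.mulVec s.2 i})
    (P : (Fin n → ℝ) × (Fin p → ℝ) → (Fin (p + 1) → ℝ))
    (hP : P = fun s => Fin.snoc s.2 (-(∑ i, s.2 i)))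
    (Spoi Sdir : Set ((Fin n → ℝ) × (Fin p → ℝ)))
    (hfin1 : Spoi.Finite) (hfin2 : Sdir.Finite) (hpne : Spoi.Nonempty)
    -- feasibility
    (hfeas1 : Spoi ⊆ S)
    (hfeas2 : ∀ s ∈ Sdir, s ≠ 0 ∧ ∀ i, (0:ℝ) ≤ G.mulVec s.1 i + H.mulVec s.2 i)
    -- finite infimizer
    (hinf : convexHull ℝ (P '' Spoi) + coneOf (P '' Sdir) +
              {z : Fin (p + 1) → ℝ | ∀ j, 0 ≤ z j} =
            (P '' S) + {z : Fin (p + 1) → ℝ | ∀ j, 0 ≤ z j})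
    -- all points are minimizers
    (hmin1 : ∀ s ∈ Spoi, ¬ ∃ v ∈ S, (∀ j, P v j ≤ P s j) ∧ P v ≠ P s)
    -- all directions are minimizers
    (hmin2 : ∀ s ∈ Sdir, ¬ ∃ v : (Fin n → ℝ) × (Fin p → ℝ),
        (∀ i, (0:ℝ) ≤ G.mulVec v.1 i + H.mulVec v.2 i) ∧
        (∀ j, P v j ≤ P s j) ∧ P v ≠ P s) :
    Y = convexHull ℝ (Prod.snd '' Spoi) + coneOf (Prod.snd '' Sdir) :=
  molp_solution_solves_polyhedral_projection_general k n p G H h Y hY S hS P hP Spoi Sdir hfeas1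
    hfeas2 hinf
end

section
/- Let 𝒫 = conv V + cone R with V ⊆ ℝ^q nonempty compact, R ⊆ ℝ^q\{0} compact, let C be a closed convex cone with 𝒫 + C ⊆ 𝒫 and L ∩ C = {0} where L is the lineality space of 𝒫, and let U be a complement of L. Then every extreme point v of 𝒫 ∩ U satisfies v ∈ (V \ (𝒫 + C\{0})) + L, i.e., v = v' + l for some v' ∈ V not dominated by C and some l ∈ L. -/
open Pointwise Set

/-- recession cone `0⁺P = {d : P + d ⊆ P}` -/
def recCone {q : ℕ} (P : Set (Fin q → ℝ)) : Set (Fin q → ℝ) :=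
  {d | ∀ y ∈ P, y + d ∈ P}

/-
Project onto `U` along the lineality space `L`. Since `L` lies in the recession cone, the
projection `π` maps `𝒫` into `𝒫 ∩ U` and recession directions to recession directions. If an
extreme point `v` of `𝒫 ∩ U` is `π (a + d)` with `a ∈ 𝒫` and `d` a recession direction, then
`v ∓ π d` both lie in `𝒫 ∩ U`, so `π d = 0`, i.e. `d ∈ L`. Applied to `v = x + r` with
`x ∈ conv V`, `r ∈ cone R`, this gives `v = π x ∈ conv (π V)`, hence `v = π z` for some `z ∈ V`;
applied to a domination `z = p + c`, it gives `c ∈ L ∩ C = {0}`.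
-/

theorem eq_zero_of_sub_mem_of_add_mem_of_mem_extremePoints {E : Type*} [AddCommGroup E]
    [Module ℝ E] {S : Set E} {x d : E} (hx : x ∈ S.extremePoints ℝ) (h₁ : x - d ∈ S)
    (h₂ : x + d ∈ S) : d = 0 := by
  have hseg : x ∈ openSegment ℝ (x - d) (x + d) :=
    ⟨1 / 2, 1 / 2, by norm_num, by norm_num, by norm_num, by module⟩
  simpa using ((mem_extremePoints.mp hx).2 _ h₁ _ h₂ hseg).1

theorem Submodule.isCompl_of_inter_eq_zero_of_add_eq_univ {R M : Type*} [Ring R]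
    [AddCommGroup M] [Module R M] {p q : Submodule R M} (h₁ : (p : Set M) ∩ q = {0})
    (h₂ : (p : Set M) + (q : Set M) = univ) : IsCompl p q :=
  ⟨disjoint_def.2 fun _ hp hq => h₁.subset ⟨hp, hq⟩,
    codisjoint_iff.2 (SetLike.coe_injective (by rw [coe_sup, h₂]; rfl))⟩

section coneOf

variable {q : ℕ} {B : Set (Fin q → ℝ)}

theorem zero_mem_coneOf : (0 : Fin q → ℝ) ∈ coneOf B :=
  mem_insert _ _

theorem smul_mem_coneOf {t : ℝ} (ht : 0 ≤ t) {x : Fin q → ℝ} (hx : x ∈ coneOf B) :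
    t • x ∈ coneOf B := by
  rcases hx with rfl | ⟨l, hl, b, hb, rfl⟩
  · simpa using zero_mem_coneOf
  · exact mem_insert_of_mem _ ⟨t * l, mul_nonneg ht hl, b, hb, smul_smul t l b⟩

theorem add_mem_coneOf {x y : Fin q → ℝ} (hx : x ∈ coneOf B) (hy : y ∈ coneOf B) :
    x + y ∈ coneOf B := by
  rcases hx with rfl | ⟨l₁, hl₁, b₁, hb₁, rfl⟩
  · simpa using hy
  rcases hy with rfl | ⟨l₂, hl₂, b₂, hb₂, rfl⟩
  · rw [add_zero]; exact mem_insert_of_mem _ ⟨l₁, hl₁, b₁, hb₁, rfl⟩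
  obtain ⟨b, hb, hsum⟩ := (convex_convexHull ℝ B).exists_mem_add_smul_eq hb₁ hb₂ hl₁ hl₂
  exact mem_insert_of_mem _ ⟨l₁ + l₂, add_nonneg hl₁ hl₂, b, hb, hsum.symm⟩

theorem convex_coneOf (B : Set (Fin q → ℝ)) : Convex ℝ (coneOf B) :=
  fun _ hx _ hy _ _ ha hb _ => add_mem_coneOf (smul_mem_coneOf ha hx) (smul_mem_coneOf hb hy)

end coneOf

section recCone

variable {q : ℕ} {P : Set (Fin q → ℝ)}

theorem add_mem_recCone {d e : Fin q → ℝ} (hd : d ∈ recCone P) (he : e ∈ recCone P) :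
    d + e ∈ recCone P :=
  fun y hy => add_assoc y d e ▸ he _ (hd y hy)

theorem nsmul_mem_recCone {d : Fin q → ℝ} (hd : d ∈ recCone P) (n : ℕ) : n • d ∈ recCone P := by
  induction n with
  | zero => simp [recCone]
  | succ n ih => rw [succ_nsmul]; exact add_mem_recCone ih hd

theorem Convex.smul_mem_recCone (hP : Convex ℝ P) {d : Fin q → ℝ} (hd : d ∈ recCone P) {t : ℝ}
    (ht : 0 ≤ t) : t • d ∈ recCone P := by
  intro y hy
  obtain ⟨n, hn⟩ := exists_nat_ge t
  rcases ht.eq_or_lt with rfl | htpos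
  · simpa using hy
  have hnpos : (0 : ℝ) < n := htpos.trans_le hn
  -- `y + t • d` lies on the segment from `y` to `y + n • d`
  have hyn : y + (n : ℝ) • d ∈ P := by
    simpa [Nat.cast_smul_eq_nsmul] using nsmul_mem_recCone hd n y hy
  have hts : t • d = (t / n) • ((n : ℝ) • d) := by
    rw [smul_smul, div_mul_cancel₀ _ hnpos.ne']
  rw [hts]
  exact hP.add_smul_mem hy hyn ⟨by positivity, div_le_one_of_le₀ hn hnpos.le⟩

def Convex.linealitySpace (hP : Convex ℝ P) : Submodule ℝ (Fin q → ℝ) where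
  carrier := recCone P ∩ -recCone P
  zero_mem' := by simp [recCone]
  add_mem' := fun ha hb =>
    ⟨add_mem_recCone ha.1 hb.1, by rw [mem_neg, neg_add]; exact add_mem_recCone ha.2 hb.2⟩
  smul_mem' := by
    intro c x hx
    rcases le_total 0 c with hc | hc
    · exact ⟨hP.smul_mem_recCone hx.1 hc, by simpa using hP.smul_mem_recCone hx.2 hc⟩
    · refine ⟨?_, ?_⟩
      · simpa using hP.smul_mem_recCone hx.2 (neg_nonneg.2 hc)
      · simpa using hP.smul_mem_recCone hx.1 (neg_nonneg.2 hc)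

end recCone

section projection

variable {q : ℕ} {P : Set (Fin q → ℝ)} {U L : Submodule ℝ (Fin q → ℝ)}
  (hLP : (L : Set (Fin q → ℝ)) ⊆ recCone P) (hUL : IsCompl U L)
include hLP

theorem projection_mem_of_mem {p : Fin q → ℝ} (hp : p ∈ P) : U.projection L hUL p ∈ P := by
  simpa using hLP (neg_mem (Submodule.sub_projection_mem hUL p)) p hp

theorem projection_mem_recCone {d : Fin q → ℝ} (hd : d ∈ recCone P) :
    U.projection L hUL d ∈ recCone P := by
  simpa using add_mem_recCone hd (hLP (neg_mem (Submodule.sub_projection_mem hUL d)))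

theorem mem_of_projection_add_mem_extremePoints {v a d : Fin q → ℝ}
    (hv : v ∈ (P ∩ U).extremePoints ℝ) (ha : a ∈ P) (hd : d ∈ recCone P)
    (hvad : U.projection L hUL (a + d) = v) : d ∈ L := by
  set π := U.projection L hUL
  have hπd : π d ∈ recCone P := projection_mem_recCone hLP hUL hd
  have hsub : v - π d ∈ P ∩ U := by
    rw [← hvad, map_add, add_sub_cancel_right]
    exact ⟨projection_mem_of_mem hLP hUL ha, U.projection_apply_mem hUL a⟩
  have hadd : v + π d ∈ P ∩ U :=
    ⟨hπd _ (by simpa [sub_add_cancel] using hπd _ hsub.1),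
      U.add_mem hv.1.2 (U.projection_apply_mem hUL d)⟩
  exact (U.projection_apply_eq_zero_iff hUL).1
    (eq_zero_of_sub_mem_of_add_mem_of_mem_extremePoints hv hsub hadd)

theorem exists_projection_eq_of_mem_extremePoints {V R : Set (Fin q → ℝ)}
    (hP : P = convexHull ℝ V + coneOf R) (hPconv : Convex ℝ P) {v : Fin q → ℝ}
    (hv : v ∈ (P ∩ U).extremePoints ℝ) : ∃ z ∈ V, U.projection L hUL z = v := by
  set π := U.projection L hUL
  have hconeR : coneOf R ⊆ recCone P := by
    rintro d hd y hy
    rw [hP] at hy ⊢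
    obtain ⟨a, ha, b, hb, rfl⟩ := hy
    exact add_assoc a b d ▸ add_mem_add ha (add_mem_coneOf hb hd)
  have hhullP : convexHull ℝ V ⊆ P := fun x hx => by
    rw [hP]; simpa using add_mem_add hx (zero_mem_coneOf (B := R))
  obtain ⟨x, hx, r, hr, hxr⟩ := mem_add.1 (hP ▸ hv.1.1 : v ∈ convexHull ℝ V + coneOf R)
  have hπv : π v = v := U.projection_apply_of_mem_left hUL hv.1.2
  have hrL : r ∈ L := mem_of_projection_add_mem_extremePoints hLP hUL hv (hhullP hx)
    (hconeR hr) (by rw [hxr, hπv])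
  have hπx : π x = v := by
    rwa [← hxr, map_add, U.projection_apply_of_mem_right hUL hrL, add_zero, hxr] at hπv
  have hhull : convexHull ℝ (π '' V) ⊆ P ∩ U :=
    convexHull_min (image_subset_iff.2 fun z hz =>
        ⟨projection_mem_of_mem hLP hUL (hhullP (subset_convexHull ℝ V hz)),
          U.projection_apply_mem hUL z⟩)
      (hPconv.inter U.convex)
  have hvhull : v ∈ convexHull ℝ (π '' V) := π.image_convexHull V ▸ ⟨x, hx, hπx⟩
  exact (mem_image _ _ _).1 <| extremePoints_convexHull_subset
    (inter_extremePoints_subset_extremePoints_of_subset hhull ⟨hvhull, hv⟩)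

end projection

theorem extreme_points_come_from_nondominated_generators_general
    (q : ℕ) (V R : Set (Fin q → ℝ))
    (P : Set (Fin q → ℝ)) (hP : P = convexHull ℝ V + coneOf R)
    (C : Set (Fin q → ℝ))
    (hPC : P + C ⊆ P)
    (L : Set (Fin q → ℝ)) (hL : L = recCone P ∩ (-recCone P))
    (hLC : L ∩ C = {0})
    (U : Submodule ℝ (Fin q → ℝ))
    (hcompl1 : L ∩ (U : Set (Fin q → ℝ)) = {0})
    (hcompl2 : L + (U : Set (Fin q → ℝ)) = Set.univ) :
    ∀ v ∈ Set.extremePoints ℝ (P ∩ (U : Set (Fin q → ℝ))),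
      v ∈ (V \ (P + (C \ {0}))) + L := by
  intro v hv
  have hPconv : Convex ℝ P := hP ▸ (convex_convexHull ℝ V).add (convex_coneOf R)
  set Lsub := hPconv.linealitySpace
  have hLsub : (Lsub : Set (Fin q → ℝ)) = L := hL.symm
  have hLP : (Lsub : Set (Fin q → ℝ)) ⊆ recCone P := fun _ hd => hd.1
  have hUL : IsCompl U Lsub := Submodule.isCompl_of_inter_eq_zero_of_add_eq_univ
    (by rw [hLsub, inter_comm, hcompl1]) (by rw [hLsub, add_comm, hcompl2])
  obtain ⟨z, hzV, hzv⟩ := exists_projection_eq_of_mem_extremePoints hLP hUL hP hPconv hv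
  refine ⟨z, ⟨hzV, ?_⟩, v - z, ?_, add_sub_cancel z v⟩
  · rintro ⟨p, hp, c, ⟨hc, hc0⟩, rfl⟩
    have hcL : c ∈ Lsub := mem_of_projection_add_mem_extremePoints hLP hUL hv hp
      (fun y hy => hPC (add_mem_add hy hc)) hzv
    exact hc0 (hLC ▸ ⟨hLsub ▸ hcL, hc⟩)
  · rw [← hLsub, ← hzv, ← neg_sub]
    exact neg_mem (Submodule.sub_projection_mem hUL z)

theorem extreme_points_come_from_nondominated_generators
    (q : ℕ) (V R : Set (Fin q → ℝ))
    (hVne : V.Nonempty) (hVcp : IsCompact V)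
    (hRcp : IsCompact R) (hR0 : (0 : Fin q → ℝ) ∉ R)
    (P : Set (Fin q → ℝ)) (hP : P = convexHull ℝ V + coneOf R)
    (C : Set (Fin q → ℝ)) (hCne : C.Nonempty) (hCcl : IsClosed C)
    (hCcv : Convex ℝ C) (hCcone : ∀ c ∈ C, ∀ l : ℝ, 0 ≤ l → l • c ∈ C)
    (hPC : P + C ⊆ P)
    (L : Set (Fin q → ℝ)) (hL : L = recCone P ∩ (-recCone P))
    (hLC : L ∩ C = {0})
    (U : Submodule ℝ (Fin q → ℝ))
    (hcompl1 : L ∩ (U : Set (Fin q → ℝ)) = {0})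
    (hcompl2 : L + (U : Set (Fin q → ℝ)) = Set.univ) :
    ∀ v ∈ Set.extremePoints ℝ (P ∩ (U : Set (Fin q → ℝ))),
      v ∈ (V \ (P + (C \ {0}))) + L :=
  extreme_points_come_from_nondominated_generators_general q V R P hP C hPC L hL hLC U hcompl1
    hcompl2
end

section
/- Consider a vector linear program (VLP): minimize Px over S = {x : Ax ≥ b} with ordering cone C = {y ∈ ℝ^q : Z^T y ≥ 0}, where ker Z^T = {0}. Let 𝒫 = P[S] + C be the upper image and L its lineality space. If L ∩ C ≠ {0}, then the VLP has no solution; in fact no feasible point x is a minimizer. -/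
open Pointwise Set

/-- `(Spoi, Sdir)` is a solution of the VLP `min Px s.t. Ax ≥ b` w.r.t. the
ordering cone `C`: a finite infimizer consisting only of minimizers. -/
def IsVLPSolution {m n q : ℕ} (A : Matrix (Fin m) (Fin n) ℝ) (b : Fin m → ℝ)
    (P : Matrix (Fin q) (Fin n) ℝ) (C : Set (Fin q → ℝ))
    (Spoi Sdir : Set (Fin n → ℝ)) : Prop :=
  Spoi.Finite ∧ Sdir.Finite ∧ Spoi.Nonempty ∧
  -- feasibility
  (∀ x ∈ Spoi, ∀ i, b i ≤ A.mulVec x i) ∧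
  (∀ x ∈ Sdir, x ≠ 0 ∧ ∀ i, (0:ℝ) ≤ A.mulVec x i) ∧
  -- minimizers
  (∀ x ∈ Spoi,
    P.mulVec x ∉ (P.mulVec '' {z | ∀ i, b i ≤ A.mulVec z i}) + (C \ {0})) ∧
  (∀ x ∈ Sdir,
    P.mulVec x ∉ (P.mulVec '' {z | ∀ i, (0:ℝ) ≤ A.mulVec z i}) + (C \ {0})) ∧
  -- finite infimizer
  convexHull ℝ (P.mulVec '' Spoi) + coneOf (P.mulVec '' Sdir) + C =
    (P.mulVec '' {z | ∀ i, b i ≤ A.mulVec z i}) + C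

/-
Take d ≠ 0 in L ∩ C. Since -d is a recession direction of the upper image, for
every feasible x the point Px - d lies in P[S] + C, say Px - d = Py + c; then Px = Py + (c + d)
with c + d ∈ C, and c + d ≠ 0 because C is pointed (ker Zᵀ = {0}) and d ≠ 0. So no feasible
point is a minimizer, while a solution must contain at least one minimizing point.
-/

section PolyhedralCone

variable {q r : ℕ} (Z : Matrix (Fin q) (Fin r) ℝ)

theorem zero_mem_setOf_mulVec_transpose_nonneg :
    (0 : Fin q → ℝ) ∈ {y | ∀ j, 0 ≤ Z.transpose.mulVec y j} := by
  simp

theorem add_mem_setOf_mulVec_transpose_nonneg {c d : Fin q → ℝ}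
    (hc : c ∈ {y | ∀ j, 0 ≤ Z.transpose.mulVec y j})
    (hd : d ∈ {y | ∀ j, 0 ≤ Z.transpose.mulVec y j}) :
    c + d ∈ {y | ∀ j, 0 ≤ Z.transpose.mulVec y j} := fun j => by
  rw [Matrix.mulVec_add]
  exact add_nonneg (hc j) (hd j)

theorem eq_zero_of_mem_setOf_mulVec_transpose_nonneg_of_neg_mem
    (hker : ∀ y : Fin q → ℝ, Z.transpose.mulVec y = 0 → y = 0) {c : Fin q → ℝ}
    (hc : c ∈ {y | ∀ j, 0 ≤ Z.transpose.mulVec y j})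
    (hnc : -c ∈ {y | ∀ j, 0 ≤ Z.transpose.mulVec y j}) :
    c = 0 := by
  refine hker c (funext fun j => le_antisymm ?_ (hc j))
  have := hnc j
  rw [Matrix.mulVec_neg, Pi.neg_apply, neg_nonneg] at this
  exact this

end PolyhedralCone

theorem zero_mem_recCone {q : ℕ} (U : Set (Fin q → ℝ)) : (0 : Fin q → ℝ) ∈ recCone U :=
  fun y hy => by simpa using hy

theorem zero_mem_lineality {q : ℕ} (U : Set (Fin q → ℝ)) :
    (0 : Fin q → ℝ) ∈ recCone U ∩ -recCone U :=
  ⟨zero_mem_recCone U, by simpa using zero_mem_recCone U⟩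

theorem mem_add_diff_zero_of_neg_mem_recCone {q : ℕ} {T C : Set (Fin q → ℝ)}
    (hC0 : (0 : Fin q → ℝ) ∈ C) (hCadd : ∀ c ∈ C, ∀ d ∈ C, c + d ∈ C)
    (hCpointed : ∀ c ∈ C, -c ∈ C → c = 0) {d : Fin q → ℝ} (hdC : d ∈ C) (hd0 : d ≠ 0)
    (hd : -d ∈ recCone (T + C)) {t : Fin q → ℝ} (ht : t ∈ T) : t ∈ T + (C \ {0}) := by
  obtain ⟨s, hs, c, hc, hsc : s + c = t + -d⟩ := hd t ⟨t, ht, 0, hC0, add_zero t⟩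
  refine ⟨s, hs, c + d, ⟨hCadd c hc d hdC, fun hcd => hd0 ?_⟩, ?_⟩
  · exact hCpointed d hdC (eq_neg_of_add_eq_zero_left hcd ▸ hc)
  · show s + (c + d) = t
    rw [← add_assoc, hsc, neg_add_cancel_right]

theorem no_solution_if_lineality_meets_cone
    (m n q r : ℕ) (A : Matrix (Fin m) (Fin n) ℝ) (b : Fin m → ℝ)
    (P : Matrix (Fin q) (Fin n) ℝ) (Z : Matrix (Fin q) (Fin r) ℝ)
    (hker : ∀ y : Fin q → ℝ, Z.transpose.mulVec y = 0 → y = 0)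
    (C : Set (Fin q → ℝ)) (hC : C = {y | ∀ j, 0 ≤ Z.transpose.mulVec y j})
    (S : Set (Fin n → ℝ)) (hS : S = {x | ∀ i, b i ≤ A.mulVec x i})
    (UI : Set (Fin q → ℝ)) (hUI : UI = (P.mulVec '' S) + C)
    (L : Set (Fin q → ℝ)) (hL : L = recCone UI ∩ (-recCone UI))
    (hLC : L ∩ C ≠ {0}) :
    (∀ x ∈ S, P.mulVec x ∈ (P.mulVec '' S) + (C \ {0})) ∧
    ¬ ∃ Spoi Sdir : Set (Fin n → ℝ), IsVLPSolution A b P C Spoi Sdir := by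
  have h0LC : (0 : Fin q → ℝ) ∈ L ∩ C :=
    hL ▸ hC ▸ ⟨zero_mem_lineality _, zero_mem_setOf_mulVec_transpose_nonneg Z⟩
  obtain ⟨d, ⟨hdL, hdC⟩, hd0⟩ := ((nontrivial_iff_ne_singleton h0LC).2 hLC).exists_ne 0
  subst hC hUI hL
  have no_minimizer := fun x (hx : x ∈ S) =>
    mem_add_diff_zero_of_neg_mem_recCone (zero_mem_setOf_mulVec_transpose_nonneg Z)
      (fun c hc d hd => add_mem_setOf_mulVec_transpose_nonneg Z hc hd)
      (fun c hc hnc => eq_zero_of_mem_setOf_mulVec_transpose_nonneg_of_neg_mem Z hker hc hnc)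
      hdC hd0 hdL.2 (mem_image_of_mem _ hx)
  refine ⟨no_minimizer, ?_⟩
  rintro ⟨Spoi, -, -, -, ⟨x, hx⟩, hfeas, -, hmin, -⟩
  subst hS
  exact hmin x hx (no_minimizer x (hfeas x hx))
end

section
/- Let a feasible VLP (minimize Px subject to Ax ≥ b, ordering cone C = {y : Z^T y ≥ 0} with ker Z^T = {0}) have upper image 𝒫 = P[S] + C with lineality space L satisfying L ∩ C = {0}. Let (X_poi, X_dir) be a solution of the associated polyhedral projection problem computing 𝒫 = {y : ∃x, Z^T y ≥ Z^T P x, Ax ≥ b}. Define S_poi = {x : (x,y) ∈ X_poi, y ∉ 𝒫 + C\{0}} and S_dir = {x : (x,y) ∈ X_dir, y ∉ 0⁺𝒫 + C\{0}}. Then (S_poi, S_dir) is a solution of the VLP. -/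
/-!
The upper image is `𝒫 = conv Y + cone D`, where `Y` and `D` are the `y`-parts of `Xpoi` and
`Xdir`, and its recession cone is `cone D`: finitely generated cones are closed, by
Carathéodory's theorem for cones. A generator `y ∈ Y` with `y = u + c`, `u ∈ 𝒫`, `0 ≠ c ∈ C` can
be dropped. Writing `u` through the generators, `y` carries weight `< 1` in `u`, since otherwise
`c` would be a nonzero element of `L ∩ C`; solving for `y` expresses it through the remaining
generators. The same argument removes dominated directions from `0⁺𝒫 = cone D + C`. Each
surviving generator `y` comes with a feasible `x` such that `y ∈ Px + C`, so `x` is a minimizer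
and the `Px` still generate `𝒫`.
-/

open Pointwise Set

section ConeHull

variable {q : ℕ}

theorem mem_coneOf_iff {B : Set (Fin q → ℝ)} {x : Fin q → ℝ} :
    x ∈ coneOf B ↔ x = 0 ∨ x ∈ ConvexCone.hull ℝ (convexHull ℝ B) := by
  rw [ConvexCone.mem_hull_of_convex (convex_convexHull ℝ B)]
  constructor
  · rintro (rfl | ⟨l, hl, p, hp, rfl⟩)
    · exact .inl rfl
    rcases hl.eq_or_lt with rfl | hl
    · exact .inl (zero_smul ℝ p)
    · exact .inr ⟨l, hl, smul_mem_smul_set hp⟩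
  · rintro (rfl | ⟨l, hl, p, hp, rfl⟩)
    · exact mem_insert 0 _
    · exact mem_insert_of_mem _ ⟨l, hl.le, p, hp, rfl⟩

theorem coneOf_eq_hull (B : Set (Fin q → ℝ)) :
    coneOf B = (PointedCone.hull ℝ B : Set (Fin q → ℝ)) := by
  ext x
  constructor
  · rintro (rfl | ⟨l, hl, p, hp, rfl⟩)
    · exact zero_mem _
    · exact (PointedCone.hull ℝ B).smul_mem hl
        (convexHull_min PointedCone.subset_hull (PointedCone.hull ℝ B).convex hp)
  · intro hx
    induction hx using Submodule.span_induction with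
    | mem b hb => exact mem_coneOf_iff.2 (.inr (ConvexCone.subset_hull (subset_convexHull ℝ B hb)))
    | zero => exact mem_insert 0 _
    | add x y _ _ hx hy =>
      rcases mem_coneOf_iff.1 hx with rfl | hx
      · rwa [zero_add]
      rcases mem_coneOf_iff.1 hy with rfl | hy
      · rwa [add_zero]
      exact mem_coneOf_iff.2 (.inr (add_mem hx hy))
    | smul a x _ hx =>
      rcases mem_coneOf_iff.1 hx with rfl | hx
      · rw [smul_zero]; exact mem_insert 0 _
      rcases a.2.eq_or_lt with ha | ha
      · rw [← Nonneg.coe_smul, ← ha, zero_smul]; exact mem_insert 0 _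
      · exact mem_coneOf_iff.2 (.inr (ConvexCone.smul_mem _ ha hx))

end ConeHull

section Closedness

variable {E : Type*} [AddCommGroup E] [Module ℝ E]

theorem mem_hull_finset_iff {s : Finset E} {x : E} :
    x ∈ PointedCone.hull ℝ (s : Set E) ↔
      ∃ w : E → ℝ, (∀ e ∈ s, 0 ≤ w e) ∧ ∑ e ∈ s, w e • e = x := by
  constructor
  · intro hx
    obtain ⟨f, -, rfl⟩ := Submodule.mem_span_finset.1 hx
    exact ⟨fun e => f e, fun e _ => (f e).2, by simp⟩
  · rintro ⟨w, hw, rfl⟩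
    exact Submodule.sum_mem _ fun e he =>
      PointedCone.smul_mem _ (hw e he) (PointedCone.subset_hull (Finset.mem_coe.2 he))

theorem exists_mem_hull_erase_of_not_linearIndepOn [DecidableEq E] {s : Finset E} {x : E}
    (hx : x ∈ PointedCone.hull ℝ (s : Set E)) (hs : ¬LinearIndepOn ℝ id (s : Set E)) :
    ∃ d ∈ s, x ∈ PointedCone.hull ℝ (s.erase d : Set E) := by
  obtain ⟨w, hw, rfl⟩ := mem_hull_finset_iff.1 hx
  obtain ⟨f, hf, i, hi, hfi⟩ := not_linearIndepOn_finset_iff.1 hs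
  simp only [id] at hf
  wlog hpos : 0 < f i generalizing f
  · exact this (-f) (by simpa using hfi) (by simpa using hf)
      (by simpa using lt_of_le_of_ne (not_lt.1 hpos) hfi)
  -- move along the relation `f` until the first weight vanishes
  obtain ⟨d, hd, hmin⟩ := (s.filter (0 < f ·)).exists_min_image (fun e => w e / f e)
    ⟨i, Finset.mem_filter.2 ⟨hi, hpos⟩⟩
  obtain ⟨hds, hfd⟩ := Finset.mem_filter.1 hd
  set θ := w d / f d
  have hθ : 0 ≤ θ := div_nonneg (hw d hds) hfd.le
  refine ⟨d, hds, mem_hull_finset_iff.2 ⟨fun e => w e - θ * f e, fun e he => ?_, ?_⟩⟩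
  · have hes := Finset.mem_of_mem_erase he
    by_cases hfe : 0 < f e
    · have := hmin e (Finset.mem_filter.2 ⟨hes, hfe⟩)
      rw [le_div_iff₀ hfe] at this
      linarith
    · nlinarith [hw e hes]
  · rw [Finset.sum_erase _ (by simp [θ, div_mul_cancel₀ _ hfd.ne'])]
    simp only [sub_smul, Finset.sum_sub_distrib, mul_smul, ← Finset.smul_sum, hf, smul_zero,
      sub_zero]

theorem exists_linearIndepOn_subset_mem_hull [DecidableEq E] (s : Finset E) {x : E}
    (hx : x ∈ PointedCone.hull ℝ (s : Set E)) :
    ∃ t ⊆ s, LinearIndepOn ℝ id (t : Set E) ∧ x ∈ PointedCone.hull ℝ (t : Set E) := by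
  induction s using Finset.strongInduction with
  | H s ih =>
    by_cases hs : LinearIndepOn ℝ id (s : Set E)
    · exact ⟨s, subset_rfl, hs, hx⟩
    obtain ⟨d, hd, hxd⟩ := exists_mem_hull_erase_of_not_linearIndepOn hx hs
    obtain ⟨t, hts, ht, hxt⟩ := ih _ (Finset.erase_ssubset hd) hxd
    exact ⟨t, hts.trans (s.erase_subset d), ht, hxt⟩

variable [TopologicalSpace E] [IsTopologicalAddGroup E] [ContinuousSMul ℝ E] [T2Space E]

theorem isClosed_hull_of_linearIndepOn {t : Finset E} (ht : LinearIndepOn ℝ id (t : Set E)) :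
    IsClosed (PointedCone.hull ℝ (t : Set E) : Set E) := by
  let f : (t → ℝ) →ₗ[ℝ] E := Fintype.linearCombination ℝ Subtype.val
  have hf : Topology.IsClosedEmbedding f := LinearMap.isClosedEmbedding_of_injective
    (LinearMap.ker_eq_bot.2 ht.fintypeLinearCombination_injective)
  have himage : (PointedCone.hull ℝ (t : Set E) : Set E) = f '' Ici 0 := by
    ext x
    rw [SetLike.mem_coe, Submodule.mem_span_finset']
    constructor
    · rintro ⟨g, rfl⟩
      exact ⟨fun e => g e, fun e => (g e).2, by simp [f, Fintype.linearCombination_apply]⟩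
    · rintro ⟨w, hw, rfl⟩
      exact ⟨fun e => ⟨w e, hw e⟩, by simp [f, Fintype.linearCombination_apply]⟩
  rw [himage]
  exact hf.isClosedMap _ isClosed_Ici

theorem isClosed_hull_of_finite {s : Set E} (hs : s.Finite) :
    IsClosed (PointedCone.hull ℝ s : Set E) := by
  classical
  lift s to Finset E using hs
  have hunion : (PointedCone.hull ℝ (s : Set E) : Set E) =
      ⋃ t ∈ s.powerset.filter (fun t : Finset E => LinearIndepOn ℝ id (t : Set E)),
        (PointedCone.hull ℝ (t : Set E) : Set E) := by
    ext x
    simp only [mem_iUnion, Finset.mem_filter, Finset.mem_powerset, exists_prop]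
    refine ⟨fun hx => ?_, fun ⟨t, ⟨hts, _⟩, hxt⟩ => Submodule.span_mono (by simpa) hxt⟩
    obtain ⟨t, hts, ht, hxt⟩ := exists_linearIndepOn_subset_mem_hull s hx
    exact ⟨t, ⟨hts, ht⟩, hxt⟩
  rw [hunion]
  exact isClosed_biUnion_finset fun t ht =>
    isClosed_hull_of_linearIndepOn (Finset.mem_filter.1 ht).2

end Closedness

open Filter Topology in
theorem mem_closure_of_forall_add_smul_mem_add {E : Type*} [NormedAddCommGroup E]
    [NormedSpace ℝ E] {B : Set E} (hB : Bornology.IsBounded B) (K : PointedCone ℝ E) {y r : E}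
    (h : ∀ n : ℕ, y + ((n : ℝ) + 1) • r ∈ B + K) : r ∈ closure (K : Set E) := by
  choose b hb k hk hbk using h
  obtain ⟨R, hR⟩ := hB.exists_norm_le
  have hk_eq : ∀ n : ℕ, ((n : ℝ) + 1)⁻¹ • k n = r + ((n : ℝ) + 1)⁻¹ • (y - b n) := by
    intro n
    rw [eq_sub_of_add_eq' (hbk n), add_sub_right_comm, smul_add, smul_smul,
      inv_mul_cancel₀ (by positivity), one_smul, add_comm]
  have hsmall : Tendsto (fun n : ℕ => ((n : ℝ) + 1)⁻¹ • (y - b n)) atTop (𝓝 0) := by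
    refine Tendsto.zero_smul_isBoundedUnder_le ?_ (isBoundedUnder_of ⟨‖y‖ + R, fun n => ?_⟩)
    · simpa only [one_div] using tendsto_one_div_add_atTop_nhds_zero_nat (𝕜 := ℝ)
    · exact (norm_sub_le _ _).trans (by gcongr; exact hR _ (hb n))
  refine mem_closure_of_tendsto (b := atTop) (f := fun n : ℕ => ((n : ℝ) + 1)⁻¹ • k n) ?_
    (Eventually.of_forall fun n => K.smul_mem (by positivity) (hk n))
  simpa only [hk_eq, add_zero] using tendsto_const_nhds.add hsmall

section RecessionCone

variable {q : ℕ}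

theorem add_natCast_smul_mem_of_mem_recCone {U : Set (Fin q → ℝ)} {y r : Fin q → ℝ}
    (hy : y ∈ U) (hr : r ∈ recCone U) (n : ℕ) : y + (n : ℝ) • r ∈ U := by
  induction n with
  | zero => simpa using hy
  | succ n ih => simpa [add_smul, ← add_assoc] using hr _ ih

theorem recCone_convexHull_add_hull {Y D : Set (Fin q → ℝ)} (hY : Y.Finite) (hYne : Y.Nonempty)
    (hD : D.Finite) :
    recCone (convexHull ℝ Y + (PointedCone.hull ℝ D : Set (Fin q → ℝ))) = PointedCone.hull ℝ D := by
  refine Subset.antisymm (fun r hr => ?_) ?_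
  · obtain ⟨y, hy⟩ := hYne
    have hyU : y ∈ convexHull ℝ Y + (PointedCone.hull ℝ D : Set (Fin q → ℝ)) :=
      ⟨y, subset_convexHull ℝ Y hy, 0, zero_mem _, add_zero y⟩
    rw [← (isClosed_hull_of_finite hD).closure_eq]
    refine mem_closure_of_forall_add_smul_mem_add (y := y)
      (hY.isCompact_convexHull (𝕜 := ℝ)).isBounded _ fun n => ?_
    exact_mod_cast add_natCast_smul_mem_of_mem_recCone hyU hr (n + 1)
  · rintro r hr _ ⟨p, hp, k, hk, rfl⟩
    exact ⟨p, hp, k + r, add_mem hk hr, (add_assoc p k r).symm⟩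

end RecessionCone

theorem Set.Finite.sep_of_forall_insert_imp {α : Type*} {p : Set α → Prop} {bad : α → Prop}
    {Y : Set α} (hY : Y.Finite) (hstep : ∀ G b, bad b → p (insert b G) → p G) (hp : p Y) :
    p {y ∈ Y | ¬bad y} := by
  have key : ∀ B : Set α, B.Finite → (∀ b ∈ B, bad b) → ∀ G, p (G ∪ B) → p G := by
    intro B hB
    induction B, hB using Set.Finite.induction_on with
    | empty => simp
    | @insert b B _ _ ih =>
      intro hbad G hG
      rw [union_insert] at hG
      exact ih (fun c hc => hbad c (mem_insert_of_mem b hc)) G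
        (hstep _ b (hbad b (mem_insert b B)) hG)
  refine key {y ∈ Y | bad y} (hY.subset (sep_subset _ _)) (fun b hb => hb.2) _ ?_
  convert hp using 2
  ext y
  simp only [mem_union, mem_sep_iff]
  tauto

theorem Set.Finite.sep_fst {α β : Type*} {X : Set (α × β)} (hX : X.Finite) {T : Set β} :
    {x | ∃ y, (x, y) ∈ X ∧ y ∉ T}.Finite :=
  (hX.image Prod.fst).subset fun x ⟨y, hxy, _⟩ => ⟨(x, y), hxy, rfl⟩

section Elimination

variable {E : Type*} [AddCommGroup E] [Module ℝ E] {C M : PointedCone ℝ E}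

theorem eq_zero_of_add_eq_zero_of_mem (hMC : ∀ x ∈ M, -x ∈ C → x = 0) {x c : E} (hx : x ∈ M)
    (hc : c ∈ C) (h : x + c = 0) : c = 0 := by
  have hnx : -x = c := neg_eq_of_add_eq_zero_right h
  rw [← hnx, hMC x hx (hnx ▸ hc), neg_zero]

theorem subset_convexHull_add_of_subset_convexHull_insert_add (hCM : C ≤ M)
    (hMC : ∀ x ∈ M, -x ∈ C → x = 0) {U G : Set E} {b : E} (hb : b ∈ U + ((C : Set E) \ {0}))
    (hU : U ⊆ convexHull ℝ (insert b G) + M) : U ⊆ convexHull ℝ G + M := by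
  obtain ⟨u, hu, c, ⟨hc, hc0⟩, hb⟩ := hb
  obtain ⟨p, hp, k, hk, rfl⟩ := hU hu
  -- `p = b` would force `k + c = 0`, so `b` has weight `< 1` in `p`
  have hpb : p ≠ b := by
    rintro rfl
    exact hc0 (eq_zero_of_add_eq_zero_of_mem hMC hk hc (by simpa [add_assoc] using hb))
  rcases G.eq_empty_or_nonempty with rfl | hG
  · exact absurd (by simpa using hp) hpb
  rw [convexHull_insert hG, mem_convexJoin] at hp
  obtain ⟨a, ha, z, hz, α, β, hα, hβ, hαβ, rfl⟩ := hp
  rw [mem_singleton_iff] at ha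
  subst a
  have hβpos : 0 < β := by
    refine hβ.lt_of_ne' fun hβ0 => hpb ?_
    simp [hβ0, (by linarith : α = 1)]
  have hbG : b ∈ convexHull ℝ G + M := by
    refine ⟨z, hz, β⁻¹ • (k + c), M.smul_mem (inv_nonneg.2 hβ) (add_mem hk (hCM hc)), ?_⟩
    apply smul_right_injective E hβpos.ne'
    simp only [smul_add, smul_inv_smul₀ hβpos.ne']
    linear_combination (norm := module) hb - hαβ • b
  have hsub : convexHull ℝ (insert b G) ⊆ convexHull ℝ G + M :=
    convexHull_min (insert_subset hbG fun g hg => ⟨g, subset_convexHull ℝ G hg, 0, zero_mem M,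
      add_zero g⟩) ((convex_convexHull ℝ G).add M.convex)
  calc U ⊆ convexHull ℝ (insert b G) + M := hU
    _ ⊆ convexHull ℝ G + M + M := add_subset_add_right hsub
    _ = convexHull ℝ G + M := by rw [add_assoc, ← Submodule.coe_sup, sup_idem]

theorem le_hull_sup_of_le_hull_insert_sup (hCM : C ≤ M) (hMC : ∀ x ∈ M, -x ∈ C → x = 0)
    {G : Set E} {b : E} (hGM : G ⊆ M) (hb : b ∈ (M : Set E) + ((C : Set E) \ {0}))
    (hM : M ≤ PointedCone.hull ℝ (insert b G) ⊔ C) : M ≤ PointedCone.hull ℝ G ⊔ C := by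
  obtain ⟨r, hr, c, ⟨hc, hc0⟩, hb⟩ := hb
  obtain ⟨e', he', c', hc', hr_eq⟩ := Submodule.mem_sup.1 (hM hr)
  obtain ⟨μ, e, he, rfl⟩ := Submodule.mem_span_insert.1 he'
  have hbM : b ∈ M := hb ▸ add_mem hr (hCM hc)
  have heM : e ∈ M := Submodule.span_le.2 hGM he
  -- for `μ < 1` solve `hexp` for `b`; for `μ ≥ 1` it puts `-c` into `M`
  have hexp : (μ : ℝ) • b + e + c' + c = b := by rw [Nonneg.coe_smul, hr_eq]; exact hb
  suffices hbG : b ∈ PointedCone.hull ℝ G ⊔ C from hM.trans <|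
    sup_le (Submodule.span_le.2 (insert_subset hbG fun g hg =>
      Submodule.mem_sup_left (PointedCone.subset_hull hg)))
      le_sup_right
  by_cases hμ : (μ : ℝ) < 1
  · have hb_eq : b = (1 - (μ : ℝ))⁻¹ • e + (1 - (μ : ℝ))⁻¹ • (c' + c) := by
      rw [← smul_add, eq_inv_smul_iff₀ (sub_pos.2 hμ).ne']
      linear_combination (norm := module) -hexp
    rw [hb_eq]
    have hμ0 : 0 ≤ (1 - (μ : ℝ))⁻¹ := inv_nonneg.2 (sub_pos.2 hμ).le
    exact Submodule.add_mem_sup (PointedCone.smul_mem _ hμ0 he) (C.smul_mem hμ0 (add_mem hc' hc))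
  · exfalso
    refine hc0 (eq_zero_of_add_eq_zero_of_mem hMC (x := ((μ : ℝ) - 1) • b + e + c') ?_ hc ?_)
    · exact add_mem (add_mem (M.smul_mem (by linarith) hbM) heM) (hCM hc')
    · linear_combination (norm := module) hexp

end Elimination

section UpperImage

variable {q : ℕ} {C : PointedCone ℝ (Fin q → ℝ)} {U Y D : Set (Fin q → ℝ)}

theorem subset_convexHull_sep_add_hull_sep_add (hY : Y.Finite) (hYne : Y.Nonempty)
    (hD : D.Finite) (hU : U = convexHull ℝ Y + (PointedCone.hull ℝ D : Set (Fin q → ℝ)))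
    (hCU : (C : Set (Fin q → ℝ)) ⊆ recCone U) (hlin : ∀ x ∈ recCone U, -x ∈ C → x = 0) :
    U ⊆ convexHull ℝ {y ∈ Y | y ∉ U + ((C : Set (Fin q → ℝ)) \ {0})} +
      (PointedCone.hull ℝ {d ∈ D | d ∉ recCone U + ((C : Set (Fin q → ℝ)) \ {0})} : Set _) +
      (C : Set (Fin q → ℝ)) := by
  have hrec : recCone U = PointedCone.hull ℝ D := hU ▸ recCone_convexHull_add_hull hY hYne hD
  set M := PointedCone.hull ℝ D
  rw [hrec] at hCU hlin ⊢
  have hCM : C ≤ M := hCU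
  have hmemM : ∀ b ∈ (M : Set (Fin q → ℝ)) + ((C : Set _) \ {0}), b ∈ M := by
    rintro _ ⟨r, hr, c, hc, rfl⟩
    exact add_mem hr (hCM hc.1)
  have hpoints : U ⊆ convexHull ℝ {y ∈ Y | y ∉ U + ((C : Set _) \ {0})} + (M : Set _) :=
    hY.sep_of_forall_insert_imp (p := fun G => U ⊆ convexHull ℝ G + (M : Set _))
      (fun _ _ hb => subset_convexHull_add_of_subset_convexHull_insert_add hCM hlin hb) hU.le
  have hdirs :
      M ≤ PointedCone.hull ℝ {d ∈ D | d ∉ (M : Set (Fin q → ℝ)) + ((C : Set _) \ {0})} ⊔ C :=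
    hD.sep_of_forall_insert_imp (p := fun G => G ⊆ M → M ≤ PointedCone.hull ℝ G ⊔ C)
      (fun _ b hb hG hGM => le_hull_sup_of_le_hull_insert_sup hCM hlin hGM hb
        (hG (insert_subset (hmemM b hb) hGM)))
      (fun _ => le_sup_left) fun _ hd => PointedCone.subset_hull hd.1
  calc U ⊆ convexHull ℝ {y ∈ Y | y ∉ U + ((C : Set _) \ {0})} + (M : Set _) := hpoints
    _ ⊆ _ := by
      rw [add_assoc, ← Submodule.coe_sup]
      exact add_subset_add_left hdirs

end UpperImage

section Representation

variable {E : Type*} [AddCommGroup E] [Module ℝ E] {K M : PointedCone ℝ E}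

theorem nonempty_of_subset_convexHull_add {U Y T : Set E} (hU : U.Nonempty)
    (h : U ⊆ convexHull ℝ Y + T) : Y.Nonempty :=
  convexHull_nonempty_iff.1 (hU.mono h).of_add_left

theorem sep_image_snd_subset_image_fst_add {α : Type*} {X : Set (α × E)} {T : Set E} (f : α → E)
    (hX : ∀ s ∈ X, s.2 - f s.1 ∈ K) :
    {y ∈ Prod.snd '' X | y ∉ T} ⊆ f '' {x | ∃ y, (x, y) ∈ X ∧ y ∉ T} + K := by
  rintro _ ⟨⟨⟨x, y⟩, hxy, rfl⟩, hy⟩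
  exact ⟨f x, ⟨x, ⟨y, hxy, hy⟩, rfl⟩, y - f x, hX _ hxy, add_sub_cancel _ _⟩

theorem notMem_add_sdiff_of_sub_mem (hK : ∀ c ∈ K, -c ∈ K → c = 0) {T T' : Set E} {y p : E}
    (hT : T' ⊆ T) (hy : y ∉ T + ((K : Set E) \ {0})) (hyp : y - p ∈ K) :
    p ∉ T' + ((K : Set E) \ {0}) := by
  rintro ⟨t, ht, c, ⟨hc, hc0⟩, rfl⟩
  refine hy ⟨t, hT ht, c + (y - (t + c)), ⟨add_mem hc hyp, fun h0 => hc0 ?_⟩,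
    by simp only; abel⟩
  exact hK c hc (neg_eq_of_add_eq_zero_right h0 ▸ hyp)

theorem fst_ne_zero_of_notMem_add_sdiff {α : Type*} [Zero α] {T : Set E} {f : α → E}
    (hf : f 0 = 0) {s : α × E} (hs : s ≠ 0) (hsK : s.2 - f s.1 ∈ K) (hT : (0 : E) ∈ T)
    (hgood : s.2 ∉ T + ((K : Set E) \ {0})) : s.1 ≠ 0 := by
  intro h0
  exact hgood ⟨0, hT, s.2, ⟨by simpa [h0, hf] using hsK, fun h2 => hs (Prod.ext h0 h2)⟩,
    zero_add _⟩

theorem convexHull_add_hull_add_eq {U Y D Y' D' : Set E} (hU : Convex ℝ U)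
    (hUM : ∀ u ∈ U, ∀ x ∈ M, u + x ∈ U) (hKM : K ≤ M) (hY' : Y' ⊆ U) (hD' : D' ⊆ M)
    (hgen : U ⊆ convexHull ℝ Y + (PointedCone.hull ℝ D : Set E) + K) (hY : Y ⊆ Y' + K)
    (hD : D ⊆ D' + K) :
    convexHull ℝ Y' + (PointedCone.hull ℝ D' : Set E) + K = U := by
  refine Subset.antisymm ?_ fun u hu => ?_
  · rintro _ ⟨_, ⟨p, hp, d, hd, rfl⟩, k, hk, rfl⟩
    exact hUM _ (hUM p (convexHull_min hY' hU hp) d (Submodule.span_le.2 hD' hd)) k (hKM hk)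
  have hKK : (K : Set E) + K = K := by rw [← Submodule.coe_sup, sup_idem]
  have hconv : convexHull ℝ Y ⊆ convexHull ℝ Y' + K :=
    convexHull_min (hY.trans (add_subset_add_right (subset_convexHull ℝ Y')))
      ((convex_convexHull ℝ Y').add K.convex)
  have hcone : PointedCone.hull ℝ D ≤ PointedCone.hull ℝ D' ⊔ K :=
    Submodule.span_le.2 (hD.trans (by
      rw [Submodule.coe_sup]
      exact add_subset_add_right (PointedCone.subset_hull (R := ℝ))))
  rw [← SetLike.coe_subset_coe, Submodule.coe_sup] at hcone
  have := add_subset_add_right (add_subset_add hconv hcone) (hgen hu)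
  rwa [add_add_add_comm, hKK, add_assoc, hKK] at this

end Representation

section VLP

variable {m n q : ℕ}

theorem coe_subset_recCone_add (T : Set (Fin q → ℝ)) (K : PointedCone ℝ (Fin q → ℝ)) :
    (K : Set (Fin q → ℝ)) ⊆ recCone (T + K) := by
  rintro c hc _ ⟨t, ht, k, hk, rfl⟩
  exact ⟨t, ht, k + c, add_mem hk hc, (add_assoc t k c).symm⟩

theorem recCone_subset_recCone_add (T K : Set (Fin q → ℝ)) : recCone T ⊆ recCone (T + K) := by
  rintro d hd _ ⟨t, ht, k, hk, rfl⟩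
  exact ⟨t + d, hd t ht, k, hk, (add_right_comm t k d).symm⟩

theorem eq_zero_of_mem_recCone_of_neg_mem {U C : Set (Fin q → ℝ)}
    (hLC : recCone U ∩ -recCone U ∩ C = {0}) (hCU : C ⊆ recCone U) {x : Fin q → ℝ}
    (hx : x ∈ recCone U) (hnx : -x ∈ C) : x = 0 := by
  have : -x ∈ recCone U ∩ -recCone U ∩ C := ⟨⟨hCU hnx, by rwa [mem_neg, neg_neg]⟩, hnx⟩
  rwa [hLC, mem_singleton_iff, neg_eq_zero] at this

theorem coe_comap_mulVecLin_positive {r : ℕ} (W : Matrix (Fin r) (Fin q) ℝ) :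
    ((PointedCone.positive ℝ (Fin r → ℝ)).comap W.mulVecLin : Set (Fin q → ℝ)) =
      {y | ∀ j, 0 ≤ W.mulVec y j} := by
  ext y
  simp [Pi.le_def]

theorem sub_mem_setOf_mulVec_nonneg {r : ℕ} (W : Matrix (Fin r) (Fin q) ℝ) {a y : Fin q → ℝ}
    (h : ∀ j, W.mulVec a j ≤ W.mulVec y j) : y - a ∈ {y | ∀ j, 0 ≤ W.mulVec y j} := fun j => by
  simpa [Matrix.mulVec_sub] using h j

variable (A : Matrix (Fin m) (Fin n) ℝ) (b : Fin m → ℝ) (P : Matrix (Fin q) (Fin n) ℝ)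

theorem mulVec_mem_recCone_image {x : Fin n → ℝ} (hx : ∀ i, 0 ≤ A.mulVec x i) :
    P.mulVec x ∈ recCone (P.mulVec '' {z | ∀ i, b i ≤ A.mulVec z i}) := by
  rintro _ ⟨z, hz, rfl⟩
  refine ⟨z + x, fun i => ?_, Matrix.mulVec_add P z x⟩
  rw [Matrix.mulVec_add, Pi.add_apply]
  linarith [hz i, hx i]

theorem isVLPSolution_of_pointedCone {K : PointedCone ℝ (Fin q → ℝ)} {UI : Set (Fin q → ℝ)}
    (hUI : UI = P.mulVec '' {z | ∀ i, b i ≤ A.mulVec z i} + K)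
    (hLC : recCone UI ∩ -recCone UI ∩ K = {0}) {Xpoi Xdir : Set ((Fin n → ℝ) × (Fin q → ℝ))}
    (hfin1 : Xpoi.Finite) (hfin2 : Xdir.Finite) (hXne : Xpoi.Nonempty)
    (hpoi : ∀ s ∈ Xpoi, (∀ i, b i ≤ A.mulVec s.1 i) ∧ s.2 - P.mulVec s.1 ∈ K)
    (hdir : ∀ s ∈ Xdir, s ≠ 0 ∧ (∀ i, (0 : ℝ) ≤ A.mulVec s.1 i) ∧ s.2 - P.mulVec s.1 ∈ K)
    (hrepr : UI = convexHull ℝ (Prod.snd '' Xpoi) +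
      (PointedCone.hull ℝ (Prod.snd '' Xdir) : Set (Fin q → ℝ))) :
    IsVLPSolution A b P K {x | ∃ y, (x, y) ∈ Xpoi ∧ y ∉ UI + ((K : Set (Fin q → ℝ)) \ {0})}
      {x | ∃ y, (x, y) ∈ Xdir ∧ y ∉ recCone UI + ((K : Set (Fin q → ℝ)) \ {0})} := by
  set M := PointedCone.hull ℝ (Prod.snd '' Xdir)
  have hKU : (K : Set (Fin q → ℝ)) ⊆ recCone UI := hUI ▸ coe_subset_recCone_add _ K
  have hlin : ∀ x ∈ recCone UI, -x ∈ K → x = 0 := fun _ => eq_zero_of_mem_recCone_of_neg_mem hLC hKU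
  have hK (c) (hc : c ∈ K) := hlin c (hKU hc)
  have hrec : recCone UI = M :=
    hrepr ▸ recCone_convexHull_add_hull (hfin1.image _) (hXne.image _) (hfin2.image _)
  have hgen := subset_convexHull_sep_add_hull_sep_add (hfin1.image _) (hXne.image _)
    (hfin2.image _) hrepr hKU hlin
  have hYg := sep_image_snd_subset_image_fst_add (T := UI + ((K : Set _) \ {0})) P.mulVec
    fun s hs => (hpoi s hs).2
  have hPS : P.mulVec '' {z | ∀ i, b i ≤ A.mulVec z i} ⊆ UI :=
    hUI ▸ subset_add_left _ (zero_mem K)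
  have hPrec : P.mulVec '' {z | ∀ i, (0 : ℝ) ≤ A.mulVec z i} ⊆ recCone UI := by
    rintro _ ⟨x, hx, rfl⟩
    exact hUI ▸ recCone_subset_recCone_add _ _ (mulVec_mem_recCone_image A b P hx)
  have hUIne : UI.Nonempty := hrepr ▸ ((hXne.image _).convexHull.add ⟨0, zero_mem M⟩)
  refine ⟨hfin1.sep_fst, hfin2.sep_fst,
    ((nonempty_of_subset_convexHull_add hUIne (hgen.trans_eq (add_assoc _ _ _))).mono
      hYg).of_add_left.of_image, fun x ⟨y, hxy, _⟩ => (hpoi _ hxy).1, fun x ⟨y, hxy, hy⟩ => ?_,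
    fun x ⟨y, hxy, hy⟩ => notMem_add_sdiff_of_sub_mem hK hPS hy (hpoi _ hxy).2,
    fun x ⟨y, hxy, hy⟩ => notMem_add_sdiff_of_sub_mem hK hPrec hy (hdir _ hxy).2.2, ?_⟩
  · obtain ⟨hne, hA, hPy⟩ := hdir _ hxy
    exact ⟨fst_ne_zero_of_notMem_add_sdiff (Matrix.mulVec_zero P) hne hPy
      (fun u _ => by rwa [add_zero]) hy, hA⟩
  rw [coneOf_eq_hull, ← hUI]
  refine convexHull_add_hull_add_eq (M := M) (hrepr ▸ (convex_convexHull ℝ _).add M.convex)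
    (fun u hu x hx => (hrec ▸ hx : x ∈ recCone UI) u hu)
    (SetLike.coe_subset_coe.1 (hrec ▸ hKU)) ?_ ?_ hgen hYg
    (sep_image_snd_subset_image_fst_add P.mulVec fun s hs => (hdir s hs).2.2)
  · rintro _ ⟨x, ⟨y, hxy, -⟩, rfl⟩
    exact hPS ⟨x, (hpoi _ hxy).1, rfl⟩
  · rintro _ ⟨x, ⟨y, hxy, -⟩, rfl⟩
    exact hrec ▸ hPrec ⟨x, (hdir _ hxy).2.1, rfl⟩

end VLP

theorem vlp_solution_from_projection_solution_general
    (m n q r : ℕ) (A : Matrix (Fin m) (Fin n) ℝ) (b : Fin m → ℝ)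
    (P : Matrix (Fin q) (Fin n) ℝ) (Z : Matrix (Fin q) (Fin r) ℝ)
    (C : Set (Fin q → ℝ)) (hC : C = {y | ∀ j, 0 ≤ Z.transpose.mulVec y j})
    (S : Set (Fin n → ℝ)) (hS : S = {x | ∀ i, b i ≤ A.mulVec x i})
    (UI : Set (Fin q → ℝ)) (hUI : UI = (P.mulVec '' S) + C)
    (L : Set (Fin q → ℝ)) (hL : L = recCone UI ∩ (-recCone UI))
    (hLC : L ∩ C = {0})
    -- (Xpoi, Xdir) is a solution of the associated polyhedral projection problem
    (Xpoi Xdir : Set ((Fin n → ℝ) × (Fin q → ℝ)))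
    (hfin1 : Xpoi.Finite) (hfin2 : Xdir.Finite) (hXne : Xpoi.Nonempty)
    (hfeas1 : ∀ s ∈ Xpoi, (∀ i, b i ≤ A.mulVec s.1 i) ∧
      (∀ j, Z.transpose.mulVec (P.mulVec s.1) j ≤ Z.transpose.mulVec s.2 j))
    (hfeas2 : ∀ s ∈ Xdir, s ≠ 0 ∧ (∀ i, (0:ℝ) ≤ A.mulVec s.1 i) ∧
      (∀ j, Z.transpose.mulVec (P.mulVec s.1) j ≤ Z.transpose.mulVec s.2 j))
    (hrepr : UI = convexHull ℝ (Prod.snd '' Xpoi) + coneOf (Prod.snd '' Xdir))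
    (Spoi Sdir : Set (Fin n → ℝ))
    (hSpoi : Spoi = {x | ∃ y, (x, y) ∈ Xpoi ∧ y ∉ UI + (C \ {0})})
    (hSdir : Sdir = {x | ∃ y, (x, y) ∈ Xdir ∧ y ∉ recCone UI + (C \ {0})}) :
    IsVLPSolution A b P C Spoi Sdir := by
  obtain ⟨K, rfl⟩ : ∃ K : PointedCone ℝ (Fin q → ℝ), (K : Set (Fin q → ℝ)) = C :=
    ⟨_, (coe_comap_mulVecLin_positive Z.transpose).trans hC.symm⟩
  have hsub {x y} (h : ∀ j, Z.transpose.mulVec (P.mulVec x) j ≤ Z.transpose.mulVec y j) :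
      y - P.mulVec x ∈ K :=
    SetLike.mem_coe.1 (hC ▸ sub_mem_setOf_mulVec_nonneg Z.transpose h)
  subst hS hL hSpoi hSdir
  rw [coneOf_eq_hull] at hrepr
  exact isVLPSolution_of_pointedCone A b P hUI hLC hfin1 hfin2 hXne
    (fun s hs => ⟨(hfeas1 s hs).1, hsub (hfeas1 s hs).2⟩)
    (fun s hs => ⟨(hfeas2 s hs).1, (hfeas2 s hs).2.1, hsub (hfeas2 s hs).2.2⟩) hrepr

theorem vlp_solution_from_projection_solution
    (m n q r : ℕ) (A : Matrix (Fin m) (Fin n) ℝ) (b : Fin m → ℝ)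
    (P : Matrix (Fin q) (Fin n) ℝ) (Z : Matrix (Fin q) (Fin r) ℝ)
    (hker : ∀ y : Fin q → ℝ, Z.transpose.mulVec y = 0 → y = 0)
    (C : Set (Fin q → ℝ)) (hC : C = {y | ∀ j, 0 ≤ Z.transpose.mulVec y j})
    (S : Set (Fin n → ℝ)) (hS : S = {x | ∀ i, b i ≤ A.mulVec x i})
    (hSne : S.Nonempty)
    (UI : Set (Fin q → ℝ)) (hUI : UI = (P.mulVec '' S) + C)
    (L : Set (Fin q → ℝ)) (hL : L = recCone UI ∩ (-recCone UI))
    (hLC : L ∩ C = {0})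
    -- (Xpoi, Xdir) is a solution of the associated polyhedral projection problem
    (Xpoi Xdir : Set ((Fin n → ℝ) × (Fin q → ℝ)))
    (hfin1 : Xpoi.Finite) (hfin2 : Xdir.Finite) (hXne : Xpoi.Nonempty)
    (hfeas1 : ∀ s ∈ Xpoi, (∀ i, b i ≤ A.mulVec s.1 i) ∧
      (∀ j, Z.transpose.mulVec (P.mulVec s.1) j ≤ Z.transpose.mulVec s.2 j))
    (hfeas2 : ∀ s ∈ Xdir, s ≠ 0 ∧ (∀ i, (0:ℝ) ≤ A.mulVec s.1 i) ∧
      (∀ j, Z.transpose.mulVec (P.mulVec s.1) j ≤ Z.transpose.mulVec s.2 j))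
    (hrepr : UI = convexHull ℝ (Prod.snd '' Xpoi) + coneOf (Prod.snd '' Xdir))
    (Spoi Sdir : Set (Fin n → ℝ))
    (hSpoi : Spoi = {x | ∃ y, (x, y) ∈ Xpoi ∧ y ∉ UI + (C \ {0})})
    (hSdir : Sdir = {x | ∃ y, (x, y) ∈ Xdir ∧ y ∉ recCone UI + (C \ {0})}) :
    IsVLPSolution A b P C Spoi Sdir :=
  vlp_solution_from_projection_solution_general m n q r A b P Z C hC S hS UI hUI L hL hLC Xpoi Xdir
    hfin1 hfin2 hXne hfeas1 hfeas2 hrepr Spoi Sdir hSpoi hSdir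
end

section
/- Consider the MOLP: minimize (y, −e^T y) ∈ ℝ^{p+1} over S = {(x,y) : Gx + Hy ≥ h} with ordering cone ℝ^{p+1}_+, where S ≠ ∅. Then the upper image of this MOLP, 𝒫̂ = P[S] + ℝ^{p+1}_+ with P(x,y) = (y, −e^T y), satisfies 𝒫̂ ∩ {z ∈ ℝ^{p+1} : z_1 + ... + z_{p+1} = 0} = P[S]; in particular Y = {y : ∃x, Gx + Hy ≥ h} is recovered by intersecting 𝒫̂ with this hyperplane and dropping the last coordinate. -/
/-!
Every point of `P[S]` lies on the hyperplane `∑ z = 0`, while a nonnegative direction `c` only stays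
on it when `∑ c = 0`, i.e. `c = 0`. Hence the section of the upper image is `P[S]` itself, and
dropping the last coordinate of `P(x, y)` returns `y`.
-/

open Pointwise Set

section

variable {ι M : Type*} [Fintype ι] [AddCommMonoid M] [PartialOrder M] [IsOrderedAddMonoid M]

theorem add_nonneg_inter_sum_eq_zero {A : Set (ι → M)} (hA : ∀ a ∈ A, ∑ j, a j = 0) :
    (A + {z | ∀ j, 0 ≤ z j}) ∩ {z | ∑ j, z j = 0} = A := by
  ext z
  constructor
  · rintro ⟨⟨a, ha, c, hc, rfl⟩, hsum⟩
    have hc_sum : ∑ j, c j = 0 := by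
      simpa only [mem_ofPred_eq, Pi.add_apply, Finset.sum_add_distrib, hA a ha, zero_add]
        using hsum
    have hc_zero : c = 0 :=
      funext fun j => (Finset.sum_eq_zero_iff_of_nonneg fun j _ => hc j).mp hc_sum j
        (Finset.mem_univ j)
    simpa [hc_zero] using ha
  · intro hz
    exact ⟨⟨z, hz, 0, fun _ => le_rfl, add_zero z⟩, hA z hz⟩

end

theorem upper_image_hyperplane_section_recovers_projection_general
    (k n p : ℕ) (G : Matrix (Fin k) (Fin n) ℝ) (H : Matrix (Fin k) (Fin p) ℝ)
    (h : Fin k → ℝ)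
    (S : Set ((Fin n → ℝ) × (Fin p → ℝ)))
    (hS : S = {s | ∀ i, h i ≤ G.mulVec s.1 i + H.mulVec s.2 i})
    (P : (Fin n → ℝ) × (Fin p → ℝ) → (Fin (p + 1) → ℝ))
    (hP : P = fun s => Fin.snoc s.2 (-(∑ i, s.2 i)))
    (UI : Set (Fin (p + 1) → ℝ))
    (hUI : UI = (P '' S) + {z : Fin (p + 1) → ℝ | ∀ j, 0 ≤ z j})
    (Y : Set (Fin p → ℝ))
    (hY : Y = {y | ∃ x : Fin n → ℝ, ∀ i, h i ≤ G.mulVec x i + H.mulVec y i}) :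
    UI ∩ {z : Fin (p + 1) → ℝ | ∑ j, z j = 0} = P '' S ∧
    Y = Fin.init '' (UI ∩ {z : Fin (p + 1) → ℝ | ∑ j, z j = 0}) := by
  have hsection : UI ∩ {z : Fin (p + 1) → ℝ | ∑ j, z j = 0} = P '' S := by
    subst hUI
    refine add_nonneg_inter_sum_eq_zero ?_
    rintro _ ⟨s, -, rfl⟩
    subst hP
    exact Fin.sum_snoc_neg_sum s.2
  refine ⟨hsection, ?_⟩
  subst hS hY hP
  rw [hsection, image_image]
  ext y
  simp [Fin.init_snoc]

theorem upper_image_hyperplane_section_recovers_projection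
    (k n p : ℕ) (G : Matrix (Fin k) (Fin n) ℝ) (H : Matrix (Fin k) (Fin p) ℝ)
    (h : Fin k → ℝ)
    (S : Set ((Fin n → ℝ) × (Fin p → ℝ)))
    (hS : S = {s | ∀ i, h i ≤ G.mulVec s.1 i + H.mulVec s.2 i})
    (hne : S.Nonempty)
    (P : (Fin n → ℝ) × (Fin p → ℝ) → (Fin (p + 1) → ℝ))
    (hP : P = fun s => Fin.snoc s.2 (-(∑ i, s.2 i)))
    (UI : Set (Fin (p + 1) → ℝ))
    (hUI : UI = (P '' S) + {z : Fin (p + 1) → ℝ | ∀ j, 0 ≤ z j})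
    (Y : Set (Fin p → ℝ))
    (hY : Y = {y | ∃ x : Fin n → ℝ, ∀ i, h i ≤ G.mulVec x i + H.mulVec y i}) :
    UI ∩ {z : Fin (p + 1) → ℝ | ∑ j, z j = 0} = P '' S ∧
    Y = Fin.init '' (UI ∩ {z : Fin (p + 1) → ℝ | ∑ j, z j = 0}) :=
  upper_image_hyperplane_section_recovers_projection_general k n p G H h S hS P hP UI hUI Y hY
end
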